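/- Under the Hopf–Lax hypotheses, any ε-optimizer for the dynamic programming principle is small: fix 0 < t < t+h < T, μ ∈ 𝒫₂(ℝ^d), ε > 0, and let ξ ∈ 𝒫_{2,μ}(ℝ^{2d}) satisfy 𝒱(t+h, exp_μ(ξ)) + h ℒ(ξ/h) ≤ 𝒱(t,μ) + ε. Then there exists a constant C' > 0, depending only on Lip(𝒢; W₂) and the coercivity parameters c, C of L, such that ‖ξ‖_μ ≤ C'(h + √(εh)). -/

import Mathlib

open MeasureTheory Set Filter Metric
open scoped Topology ENNReal NNReal

noncomputable section

abbrev E (d : ℕ) : Type := EuclideanSpace ℝ (Fin d)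

/-- Real inner product. -/
def rinner {d : ℕ} (x y : E d) : ℝ := inner ℝ x y

/-- The second moment of a measure. -/
def secondMoment {d : ℕ} (μ : Measure (E d)) : ℝ := ∫ x, ‖x‖ ^ 2 ∂μ

/-- `γ` is a coupling of `μ` and `ν`. -/
def IsCoupling {d : ℕ} (γ : Measure (E d × E d)) (μ ν : Measure (E d)) : Prop :=
  γ.map Prod.fst = μ ∧ γ.map Prod.snd = ν

/-- The 2-Wasserstein distance. -/
def W2 {d : ℕ} (μ ν : Measure (E d)) : ℝ :=
  sInf {c | ∃ γ : Measure (E d × E d), IsProbabilityMeasure γ ∧ IsCoupling γ μ ν ∧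
    c = Real.sqrt (∫ p, ‖p.1 - p.2‖ ^ 2 ∂γ)}

/-- Probability measures with finite second moment. -/
def P2 (d : ℕ) : Set (Measure (E d)) :=
  {μ | IsProbabilityMeasure μ ∧ Integrable (fun x => ‖x‖ ^ 2) μ}

/-- Plans (velocity plans) with first marginal `μ` and finite second moment. -/
def plans {d : ℕ} (μ : Measure (E d)) : Set (Measure (E d × E d)) :=
  {γ | IsProbabilityMeasure γ ∧ γ.map Prod.fst = μ ∧
    Integrable (fun p => ‖p.1‖ ^ 2 + ‖p.2‖ ^ 2) γ}

/-- The Wasserstein norm of a plan: `‖γ‖_μ = (∫ |z|² dγ(x,z))^{1/2}`. -/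
def plNorm {d : ℕ} (γ : Measure (E d × E d)) : ℝ := Real.sqrt (∫ p, ‖p.2‖ ^ 2 ∂γ)

/-- The exponential map `exp_μ(γ) = (π₁ + π₂)_# γ`. -/
def expMap {d : ℕ} (γ : Measure (E d × E d)) : Measure (E d) :=
  γ.map (fun p => p.1 + p.2)

/-- Rescaling of a plan in the second coordinate: `λ·γ = (π₁, λπ₂)_# γ`. -/
def scal {d : ℕ} (lam : ℝ) (γ : Measure (E d × E d)) : Measure (E d × E d) :=
  γ.map (fun p => (p.1, lam • p.2))

/-- Couplings of two plans along their common first marginal. -/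
def GammaMu {d : ℕ} (γ₁ γ₂ : Measure (E d × E d)) : Set (Measure (E d × E d × E d)) :=
  {θ | IsProbabilityMeasure θ ∧ θ.map (fun q => (q.1, q.2.1)) = γ₁ ∧
    θ.map (fun q => (q.1, q.2.2)) = γ₂}

/-- The relaxed Lagrangian `ℒ(γ) = ∫ L(v) dγ(x,v)`. -/
def Lag {d : ℕ} (L : E d → ℝ) (γ : Measure (E d × E d)) : ℝ := ∫ p, L p.2 ∂γ

/-- The Hopf-Lax function. -/
def HL {d : ℕ} (G : Measure (E d) → ℝ) (L : E d → ℝ) (T t : ℝ) (μ : Measure (E d)) : ℝ :=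
  sInf {r | ∃ γ ∈ plans μ, r = G (expMap γ) + (T - t) * Lag L (scal (T - t)⁻¹ γ)}

/-!
Let `N = ‖ξ‖_μ`. Time monotonicity of `𝒱`, followed by its Lipschitz bound along the coupling
`(x, x + v)_# ξ` of `μ` and `exp_μ ξ` (whose cost is exactly `N`), gives
`𝒱(t, μ) ≤ 𝒱(t + h, exp_μ ξ) + K N`. The `ε`-optimality of `ξ` then leaves `h ℒ(ξ/h) ≤ K N + ε`,
and coercivity of `L` turns this into `c N² ≤ K h N + C h² + ε h`, from which `N` is absorbed.

The Lipschitz bound of `𝒱(s, ·)` is proved by transporting every plan at `ν` to a plan at `μ` with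
the same velocities, gluing it to a coupling of `μ` and `ν` through its disintegration.
-/

open scoped ProbabilityTheory

lemma ConvexOn.mul_apply_inv_smul_le {V : Type*} [AddCommGroup V] [Module ℝ V] {L : V → ℝ}
    (hL : ConvexOn ℝ univ L) (hL0 : L 0 = 0) {s s' : ℝ} (hs : 0 < s) (hss' : s ≤ s') (v : V) :
    s' * L (s'⁻¹ • v) ≤ s * L (s⁻¹ • v) := by
  have hs' : 0 < s' := hs.trans_le hss'
  have hconv := hL.2 (mem_univ (s⁻¹ • v)) (mem_univ 0) (div_nonneg hs.le hs'.le)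
    (sub_nonneg.2 ((div_le_one hs').2 hss')) (add_sub_cancel _ _)
  have harg : (s / s') • (s⁻¹ • v) + (1 - s / s') • (0 : V) = s'⁻¹ • v := by
    rw [smul_zero, add_zero, smul_smul]
    congr 1
    field_simp
  rw [harg, hL0, smul_zero, add_zero, smul_eq_mul] at hconv
  calc s' * L (s'⁻¹ • v) ≤ s' * (s / s' * L (s⁻¹ • v)) := by gcongr
    _ = s * L (s⁻¹ • v) := by field_simp

lemma le_mul_add_sqrt_of_div_sub_le {N h ε K c C : ℝ} (hN : 0 ≤ N) (hh : 0 < h) (hε : 0 ≤ ε)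
    (hK : 0 ≤ K) (hc : 0 < c) (hC : 0 ≤ C) (hNh : c * N ^ 2 / h - C * h ≤ K * N + ε) :
    N ≤ (1 + (K + C + 1) / c) * (h + √(ε * h)) := by
  set M := 1 + (K + C + 1) / c
  set e := √(ε * h)
  have he : 0 ≤ e := Real.sqrt_nonneg _
  have he2 : e ^ 2 = ε * h := Real.sq_sqrt (by positivity)
  have hM : 1 ≤ M := le_add_of_nonneg_right (by positivity)
  have hcM : K + C + 1 ≤ c * M := by
    simp only [M, mul_add, mul_div_cancel₀ _ hc.ne']
    linarith
  have hquad : c * N ^ 2 ≤ K * h * N + C * h ^ 2 + e ^ 2 := by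
    rw [he2]
    have := mul_le_mul_of_nonneg_left hNh hh.le
    rw [mul_sub, mul_div_cancel₀ _ hh.ne'] at this
    nlinarith
  by_contra! hlt
  have hMhe : h + e ≤ M * (h + e) := le_mul_of_one_le_left (by positivity) hM
  have hhN : h ≤ N := by linarith
  have heN : e ≤ N := by linarith
  -- `c N² > c M (h + e) N ≥ (K + C + 1) (h + e) N`, which beats each term on the right
  have hcN : c * M * (h + e) * N < c * N ^ 2 := by
    rw [sq, mul_assoc c, mul_assoc c]
    exact mul_lt_mul_of_pos_left (mul_lt_mul_of_pos_right hlt (by linarith)) hc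
  have hKC : (K + C + 1) * ((h + e) * N) ≤ c * M * ((h + e) * N) :=
    mul_le_mul_of_nonneg_right hcM (by positivity)
  nlinarith [mul_le_mul_of_nonneg_left hhN (mul_nonneg hC hh.le),
    mul_le_mul_of_nonneg_left heN he, mul_nonneg hK (mul_nonneg he hN)]

section Plans

variable {d : ℕ}

lemma plNorm_sq (γ : Measure (E d × E d)) : plNorm γ ^ 2 = ∫ p, ‖p.2‖ ^ 2 ∂γ :=
  Real.sq_sqrt (integral_nonneg fun _ => sq_nonneg _)

lemma integrable_norm_sq_snd {μ : Measure (E d)} {γ : Measure (E d × E d)} (hγ : γ ∈ plans μ) :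
    Integrable (fun p : E d × E d => ‖p.2‖ ^ 2) γ :=
  integrable_of_le_of_le (by fun_prop) (ae_of_all _ fun _ => sq_nonneg _)
    (ae_of_all _ fun p => le_add_of_nonneg_left (sq_nonneg ‖p.1‖)) (integrable_zero _ _ _) hγ.2.2

lemma Lag_scal {L : E d → ℝ} (hLc : Continuous L) (a : ℝ) (γ : Measure (E d × E d)) :
    Lag L (scal a γ) = ∫ p, L (a • p.2) ∂γ :=
  integral_map (by fun_prop) (hLc.comp continuous_snd).aestronglyMeasurable

lemma Lag_scal_eq_of_map_snd_eq {L : E d → ℝ} (hLc : Continuous L) (a : ℝ)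
    {γ γ' : Measure (E d × E d)} (h : γ'.map Prod.snd = γ.map Prod.snd) :
    Lag L (scal a γ') = Lag L (scal a γ) := by
  have hcomp : Continuous fun z : E d => L (a • z) := by fun_prop
  rw [Lag_scal hLc, Lag_scal hLc,
    ← integral_map measurable_snd.aemeasurable hcomp.aestronglyMeasurable, h,
    integral_map measurable_snd.aemeasurable hcomp.aestronglyMeasurable]

lemma integrable_comp_smul_snd {L : E d → ℝ} {c C C₂ : ℝ} (hLc : Continuous L)
    (hcoer : ∀ z, c * ‖z‖ ^ 2 - C ≤ L z) (hq : ∀ z, L z ≤ C₂ * (1 + ‖z‖ ^ 2)) (a : ℝ)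
    {μ : Measure (E d)} {γ : Measure (E d × E d)} (hγ : γ ∈ plans μ) :
    Integrable (fun p : E d × E d => L (a • p.2)) γ := by
  have := hγ.1
  have hsq := integrable_norm_sq_snd hγ
  have hnorm (p : E d × E d) : ‖a • p.2‖ ^ 2 = a ^ 2 * ‖p.2‖ ^ 2 := by
    rw [norm_smul, mul_pow, Real.norm_eq_abs, sq_abs]
  refine integrable_of_le_of_le (g₁ := fun p => c * (a ^ 2 * ‖p.2‖ ^ 2) - C)
    (g₂ := fun p => C₂ * (1 + a ^ 2 * ‖p.2‖ ^ 2)) (by fun_prop)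
    (ae_of_all _ fun p => hnorm p ▸ hcoer (a • p.2))
    (ae_of_all _ fun p => hnorm p ▸ hq (a • p.2))
    (((hsq.const_mul _).const_mul c).sub (integrable_const C))
    (((integrable_const 1).add (hsq.const_mul _)).const_mul C₂)

lemma div_sub_le_mul_Lag_scal_inv {L : E d → ℝ} {c C C₂ : ℝ} (hLc : Continuous L)
    (hcoer : ∀ z, c * ‖z‖ ^ 2 - C ≤ L z) (hq : ∀ z, L z ≤ C₂ * (1 + ‖z‖ ^ 2))
    {μ : Measure (E d)} {γ : Measure (E d × E d)} (hγ : γ ∈ plans μ) {s : ℝ} (hs : 0 < s) :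
    c * plNorm γ ^ 2 / s - C * s ≤ s * Lag L (scal s⁻¹ γ) := by
  have := hγ.1
  have hsq := integrable_norm_sq_snd hγ
  have hpt (p : E d × E d) : c * s⁻¹ ^ 2 * ‖p.2‖ ^ 2 - C ≤ L (s⁻¹ • p.2) := by
    have := hcoer (s⁻¹ • p.2)
    rwa [norm_smul, mul_pow, Real.norm_eq_abs, sq_abs, ← mul_assoc] at this
  have hLag : c * s⁻¹ ^ 2 * plNorm γ ^ 2 - C ≤ Lag L (scal s⁻¹ γ) := by
    have hlow : Integrable (fun p : E d × E d => c * s⁻¹ ^ 2 * ‖p.2‖ ^ 2 - C) γ :=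
      (hsq.const_mul _).sub (integrable_const C)
    have := integral_mono hlow (integrable_comp_smul_snd hLc hcoer hq _ hγ) hpt
    rwa [integral_sub (hsq.const_mul _) (integrable_const C), integral_const_mul, integral_const,
      probReal_univ, one_smul, ← plNorm_sq, ← Lag_scal hLc] at this
  calc c * plNorm γ ^ 2 / s - C * s = s * (c * s⁻¹ ^ 2 * plNorm γ ^ 2 - C) := by
        field_simp
    _ ≤ s * Lag L (scal s⁻¹ γ) := by gcongr

lemma W2_le_sqrt_integral {μ ν : Measure (E d)} {π : Measure (E d × E d)}
    [IsProbabilityMeasure π] (hπ : IsCoupling π μ ν) :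
    W2 μ ν ≤ √(∫ p, ‖p.1 - p.2‖ ^ 2 ∂π) :=
  csInf_le ⟨0, by rintro _ ⟨_, -, -, rfl⟩; positivity⟩ ⟨π, inferInstance, hπ, rfl⟩

def couplingExpMap (γ : Measure (E d × E d)) : Measure (E d × E d) :=
  γ.map fun p => (p.1, p.1 + p.2)

instance (γ : Measure (E d × E d)) [IsProbabilityMeasure γ] :
    IsProbabilityMeasure (couplingExpMap γ) :=
  Measure.isProbabilityMeasure_map (by fun_prop)

lemma isCoupling_couplingExpMap {μ : Measure (E d)} {γ : Measure (E d × E d)}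
    (hγ : γ.map Prod.fst = μ) : IsCoupling (couplingExpMap γ) μ (expMap γ) := by
  constructor
  · rw [couplingExpMap, Measure.map_map measurable_fst (by fun_prop)]
    exact hγ
  · rw [couplingExpMap, Measure.map_map measurable_snd (by fun_prop)]
    rfl

lemma sqrt_integral_couplingExpMap (γ : Measure (E d × E d)) :
    √(∫ p, ‖p.1 - p.2‖ ^ 2 ∂couplingExpMap γ) = plNorm γ := by
  rw [couplingExpMap, integral_map (by fun_prop) (by fun_prop)]
  simp [plNorm]

lemma W2_le_plNorm {μ : Measure (E d)} {γ : Measure (E d × E d)} [IsProbabilityMeasure γ]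
    (hγ : γ.map Prod.fst = μ) : W2 μ (expMap γ) ≤ plNorm γ :=
  sqrt_integral_couplingExpMap γ ▸ W2_le_sqrt_integral (isCoupling_couplingExpMap hγ)

lemma expMap_mem_P2 {μ : Measure (E d)} {γ : Measure (E d × E d)} (hγ : γ ∈ plans μ) :
    expMap γ ∈ P2 d := by
  obtain ⟨hp, -, hint⟩ := hγ
  refine ⟨Measure.isProbabilityMeasure_map (by fun_prop), ?_⟩
  rw [expMap, integrable_map_measure (by fun_prop) (by fun_prop)]
  refine integrable_of_le_of_le (by fun_prop) (ae_of_all _ fun _ => sq_nonneg _)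
    (ae_of_all _ fun p => ?_) (integrable_zero _ _ _) (hint.const_mul 2)
  have := norm_add_le p.1 p.2
  have := norm_nonneg (p.1 + p.2)
  simp only [Function.comp_apply]
  nlinarith [sq_nonneg (‖p.1‖ - ‖p.2‖)]

def restPlan (μ : Measure (E d)) : Measure (E d × E d) := μ.map fun x => (x, 0)

lemma restPlan_mem_plans {μ : Measure (E d)} (hμ : μ ∈ P2 d) : restPlan μ ∈ plans μ := by
  have := hμ.1
  refine ⟨Measure.isProbabilityMeasure_map (by fun_prop), ?_, ?_⟩
  · rw [restPlan, Measure.map_map measurable_fst (by fun_prop)]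
    exact Measure.map_id
  · rw [restPlan, integrable_map_measure (by fun_prop) (by fun_prop)]
    simpa [Function.comp_def] using hμ.2

lemma expMap_restPlan (μ : Measure (E d)) : expMap (restPlan μ) = μ := by
  rw [expMap, restPlan, Measure.map_map (by fun_prop) (by fun_prop)]
  simp [Function.comp_def]

lemma Lag_scal_restPlan {L : E d → ℝ} (hLc : Continuous L) (hL0 : L 0 = 0) (a : ℝ)
    (μ : Measure (E d)) : Lag L (scal a (restPlan μ)) = 0 := by
  rw [Lag_scal hLc, restPlan, integral_map (by fun_prop) (by fun_prop)]
  simp [hL0]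

lemma exists_map_fst_eq_W2_expMap_le (π γ : Measure (E d × E d)) [IsProbabilityMeasure π]
    [IsProbabilityMeasure γ] (hγ : γ.map Prod.fst = π.map Prod.snd) :
    ∃ γ' : Measure (E d × E d), IsProbabilityMeasure γ' ∧ γ'.map Prod.fst = π.map Prod.fst ∧
      γ'.map Prod.snd = γ.map Prod.snd ∧
      W2 (expMap γ') (expMap γ) ≤ √(∫ p, ‖p.1 - p.2‖ ^ 2 ∂π) := by
  -- `θ` is the law of `(x, y, v)` with `(x, y) ∼ π` and `v` drawn from `γ` conditionally on `y`
  set θ : Measure ((E d × E d) × E d) := π ⊗ₘ (γ.condKernel.comap Prod.snd measurable_snd)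
  have hθfst : θ.map Prod.fst = π := Measure.fst_compProd π _
  have hθγ : θ.map (fun q => (q.1.2, q.2)) = γ := by
    have hg : Measurable fun q : (E d × E d) × E d => (q.1.2, q.2) := by fun_prop
    have key : θ.map (fun q => (q.1.2, q.2)) = (π.map Prod.snd) ⊗ₘ γ.condKernel := by
      ext s hs
      rw [Measure.map_apply hg hs, Measure.compProd_apply (hg hs), Measure.compProd_apply hs,
        lintegral_map (ProbabilityTheory.Kernel.measurable_kernel_prodMk_left hs) measurable_snd]
      rfl
    rw [key, ← hγ]
    exact γ.disintegrate γ.condKernel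
  set γ' : Measure (E d × E d) := θ.map fun q => (q.1.1, q.2)
  set ρ : Measure (E d × E d) := θ.map fun q => (q.1.1 + q.2, q.1.2 + q.2)
  have hρ : IsCoupling ρ (expMap γ') (expMap γ) := by
    constructor
    · rw [Measure.map_map measurable_fst (by fun_prop), expMap,
        Measure.map_map (by fun_prop) (by fun_prop)]
      rfl
    · rw [Measure.map_map measurable_snd (by fun_prop), expMap, ← hθγ,
        Measure.map_map (by fun_prop) (by fun_prop)]
      rfl
  have hcost : ∫ p, ‖p.1 - p.2‖ ^ 2 ∂ρ = ∫ p, ‖p.1 - p.2‖ ^ 2 ∂π := by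
    rw [integral_map (by fun_prop) (by fun_prop), ← hθfst,
      integral_map (by fun_prop) (by fun_prop)]
    simp only [add_sub_add_right_eq_sub]
  have : IsProbabilityMeasure ρ := Measure.isProbabilityMeasure_map (by fun_prop)
  refine ⟨γ', Measure.isProbabilityMeasure_map (by fun_prop), ?_, ?_,
    hcost ▸ W2_le_sqrt_integral hρ⟩
  · rw [Measure.map_map measurable_fst (by fun_prop), ← hθfst,
      Measure.map_map measurable_fst measurable_fst]
    rfl
  · rw [Measure.map_map measurable_snd (by fun_prop), ← hθγ,
      Measure.map_map measurable_snd (by fun_prop)]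
    rfl

lemma exists_mem_plans_W2_expMap_le {μ ν : Measure (E d)} (hμ : μ ∈ P2 d)
    {π : Measure (E d × E d)} [IsProbabilityMeasure π] (hπ : IsCoupling π μ ν)
    {γ : Measure (E d × E d)} (hγ : γ ∈ plans ν) :
    ∃ γ' ∈ plans μ, γ'.map Prod.snd = γ.map Prod.snd ∧
      W2 (expMap γ') (expMap γ) ≤ √(∫ p, ‖p.1 - p.2‖ ^ 2 ∂π) := by
  have := hγ.1
  obtain ⟨γ', hγ'prob, hγ'fst, hγ'snd, hW2⟩ :=
    exists_map_fst_eq_W2_expMap_le π γ (by rw [hγ.2.1, hπ.2])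
  rw [hπ.1] at hγ'fst
  have hfst : Integrable (fun p : E d × E d => ‖p.1‖ ^ 2) γ' := by
    have := hμ.2
    rwa [← hγ'fst, integrable_map_measure (by fun_prop) (by fun_prop)] at this
  have hsnd : Integrable (fun z : E d => ‖z‖ ^ 2) (γ'.map Prod.snd) := by
    rw [hγ'snd, integrable_map_measure (by fun_prop) (by fun_prop)]
    exact integrable_norm_sq_snd hγ
  rw [integrable_map_measure (by fun_prop) (by fun_prop)] at hsnd
  exact ⟨γ', ⟨hγ'prob, hγ'fst, hfst.add hsnd⟩, hγ'snd, hW2⟩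

end Plans

def hopfLaxCost {d : ℕ} (G : Measure (E d) → ℝ) (L : E d → ℝ) (s : ℝ)
    (γ : Measure (E d × E d)) : ℝ :=
  G (expMap γ) + s * Lag L (scal s⁻¹ γ)

section HopfLax

variable {d : ℕ} {L : E d → ℝ} {G : Measure (E d) → ℝ} {K c C C₂ : ℝ}

lemma mul_Lag_scal_inv_le (hLconv : ConvexOn ℝ univ L) (hLc : Continuous L) (hL0 : L 0 = 0)
    (hcoer : ∀ z, c * ‖z‖ ^ 2 - C ≤ L z) (hq : ∀ z, L z ≤ C₂ * (1 + ‖z‖ ^ 2))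
    {μ : Measure (E d)} {γ : Measure (E d × E d)} (hγ : γ ∈ plans μ) {s s' : ℝ} (hs : 0 < s)
    (hss' : s ≤ s') : s' * Lag L (scal s'⁻¹ γ) ≤ s * Lag L (scal s⁻¹ γ) := by
  rw [Lag_scal hLc, Lag_scal hLc, ← integral_const_mul, ← integral_const_mul]
  exact integral_mono ((integrable_comp_smul_snd hLc hcoer hq _ hγ).const_mul _)
    ((integrable_comp_smul_snd hLc hcoer hq _ hγ).const_mul _)
    fun p => hLconv.mul_apply_inv_smul_le hL0 hs hss' p.2

lemma sub_le_hopfLaxCost (hLc : Continuous L) (hc : 0 < c)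
    (hcoer : ∀ z, c * ‖z‖ ^ 2 - C ≤ L z) (hq : ∀ z, L z ≤ C₂ * (1 + ‖z‖ ^ 2)) (hK : 0 ≤ K)
    (hG : ∀ μ ∈ P2 d, ∀ ν ∈ P2 d, |G μ - G ν| ≤ K * W2 μ ν) {μ : Measure (E d)} (hμ : μ ∈ P2 d)
    {γ : Measure (E d × E d)} (hγ : γ ∈ plans μ) {s : ℝ} (hs : 0 < s) :
    G μ - C * s - K ^ 2 * s / (4 * c) ≤ hopfLaxCost G L s γ := by
  have := hγ.1
  set N := plNorm γ
  have hGN : G μ - K * N ≤ G (expMap γ) := by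
    have hW2 := mul_le_mul_of_nonneg_left (W2_le_plNorm hγ.2.1) hK
    linarith [(abs_le.1 (hG μ hμ _ (expMap_mem_P2 hγ))).2]
  have hLag := div_sub_le_mul_Lag_scal_inv hLc hcoer hq hγ hs
  have hsq : 0 ≤ c * N ^ 2 / s - K * N + K ^ 2 * s / (4 * c) := by
    have : c * N ^ 2 / s - K * N + K ^ 2 * s / (4 * c) = s / (4 * c) * (2 * c * N / s - K) ^ 2 := by
      field_simp
      ring
    rw [this]
    positivity
  unfold hopfLaxCost
  linarith

lemma HL_le_hopfLaxCost (hLc : Continuous L) (hc : 0 < c)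
    (hcoer : ∀ z, c * ‖z‖ ^ 2 - C ≤ L z) (hq : ∀ z, L z ≤ C₂ * (1 + ‖z‖ ^ 2)) (hK : 0 ≤ K)
    (hG : ∀ μ ∈ P2 d, ∀ ν ∈ P2 d, |G μ - G ν| ≤ K * W2 μ ν) {μ : Measure (E d)} (hμ : μ ∈ P2 d)
    {γ : Measure (E d × E d)} (hγ : γ ∈ plans μ) {T t : ℝ} (ht : t < T) :
    HL G L T t μ ≤ hopfLaxCost G L (T - t) γ :=
  csInf_le ⟨_, by
    rintro _ ⟨γ, hγ, rfl⟩
    exact sub_le_hopfLaxCost hLc hc hcoer hq hK hG hμ hγ (sub_pos.2 ht)⟩ ⟨γ, hγ, rfl⟩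

lemma le_HL_of_forall_le (hLc : Continuous L) (hL0 : L 0 = 0) {μ : Measure (E d)}
    (hμ : μ ∈ P2 d) {T t a : ℝ} (h : ∀ γ ∈ plans μ, a ≤ hopfLaxCost G L (T - t) γ) :
    a ≤ HL G L T t μ := by
  refine le_csInf ⟨G μ, restPlan μ, restPlan_mem_plans hμ, ?_⟩ ?_
  · rw [expMap_restPlan, Lag_scal_restPlan hLc hL0, mul_zero, add_zero]
  · rintro _ ⟨γ, hγ, rfl⟩
    exact h γ hγ

lemma HL_mono (hLconv : ConvexOn ℝ univ L) (hLc : Continuous L) (hL0 : L 0 = 0) (hc : 0 < c)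
    (hcoer : ∀ z, c * ‖z‖ ^ 2 - C ≤ L z) (hq : ∀ z, L z ≤ C₂ * (1 + ‖z‖ ^ 2)) (hK : 0 ≤ K)
    (hG : ∀ μ ∈ P2 d, ∀ ν ∈ P2 d, |G μ - G ν| ≤ K * W2 μ ν) {μ : Measure (E d)} (hμ : μ ∈ P2 d)
    {T t t' : ℝ} (htt' : t ≤ t') (ht' : t' < T) :
    HL G L T t μ ≤ HL G L T t' μ :=
  le_HL_of_forall_le hLc hL0 hμ fun _ hγ =>
    (HL_le_hopfLaxCost hLc hc hcoer hq hK hG hμ hγ (htt'.trans_lt ht')).trans <|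
      add_le_add_right (mul_Lag_scal_inv_le hLconv hLc hL0 hcoer hq hγ (sub_pos.2 ht')
        (sub_le_sub_left htt' T)) _

lemma HL_le_HL_add_sqrt_integral (hLc : Continuous L) (hL0 : L 0 = 0) (hc : 0 < c)
    (hcoer : ∀ z, c * ‖z‖ ^ 2 - C ≤ L z) (hq : ∀ z, L z ≤ C₂ * (1 + ‖z‖ ^ 2)) (hK : 0 ≤ K)
    (hG : ∀ μ ∈ P2 d, ∀ ν ∈ P2 d, |G μ - G ν| ≤ K * W2 μ ν) {μ ν : Measure (E d)}
    (hμ : μ ∈ P2 d) (hν : ν ∈ P2 d) {π : Measure (E d × E d)} [IsProbabilityMeasure π]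
    (hπ : IsCoupling π μ ν) {T t : ℝ} (ht : t < T) :
    HL G L T t μ ≤ HL G L T t ν + K * √(∫ p, ‖p.1 - p.2‖ ^ 2 ∂π) := by
  rw [← sub_le_iff_le_add]
  refine le_HL_of_forall_le hLc hL0 hν fun γ hγ => ?_
  obtain ⟨γ', hγ', hsnd, hW2⟩ := exists_mem_plans_W2_expMap_le hμ hπ hγ
  have hHL := HL_le_hopfLaxCost hLc hc hcoer hq hK hG hμ hγ' ht
  have hGG := (abs_le.1 (hG _ (expMap_mem_P2 hγ') _ (expMap_mem_P2 hγ))).2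
  have hKW2 := mul_le_mul_of_nonneg_left hW2 hK
  unfold hopfLaxCost at hHL ⊢
  rw [Lag_scal_eq_of_map_snd_eq hLc _ hsnd] at hHL
  linarith

end HopfLax

theorem hopf_lax_eps_optimizer_small_general {d : ℕ} (L : E d → ℝ) (G : Measure (E d) → ℝ)
    (T K c C : ℝ)
    (hLconv : ConvexOn ℝ Set.univ L) (hL0 : L 0 = 0)
    (hquad : ∃ C' > 0, ∀ z : E d, L z ≤ C' * (1 + ‖z‖ ^ 2))
    (hc : 0 < c) (hC : 0 < C)
    (hcoer : ∀ z : E d, c * ‖z‖ ^ 2 - C ≤ L z)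
    (hK : 0 ≤ K)
    (hG : ∀ μ ∈ P2 d, ∀ ν ∈ P2 d, |G μ - G ν| ≤ K * W2 μ ν) :
    ∃ C' > 0, ∀ (t h ε : ℝ) (μ : Measure (E d)) (ξ : Measure (E d × E d)),
      0 < t → 0 < h → t + h < T → 0 < ε → μ ∈ P2 d → ξ ∈ plans μ →
      HL G L T (t + h) (expMap ξ) + h * Lag L (scal h⁻¹ ξ) ≤ HL G L T t μ + ε →
      plNorm ξ ≤ C' * (h + Real.sqrt (ε * h)) := by
  obtain ⟨C₂, -, hq⟩ := hquad
  have hLc : Continuous L := continuousOn_univ.1 (hLconv.continuousOn isOpen_univ)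
  refine ⟨1 + (K + C + 1) / c, by positivity, fun t h ε μ ξ _ hh hT hε hμ hξ hopt => ?_⟩
  have := hξ.1
  have hDρ : HL G L T t μ ≤ HL G L T (t + h) (expMap ξ) + K * plNorm ξ := by
    calc HL G L T t μ ≤ HL G L T (t + h) μ :=
          HL_mono hLconv hLc hL0 hc hcoer hq hK hG hμ (by linarith) hT
      _ ≤ HL G L T (t + h) (expMap ξ) + K * plNorm ξ := by
          rw [← sqrt_integral_couplingExpMap ξ]
          exact HL_le_HL_add_sqrt_integral hLc hL0 hc hcoer hq hK hG hμ (expMap_mem_P2 hξ)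
            (isCoupling_couplingExpMap hξ.2.1) hT
  have hLag := div_sub_le_mul_Lag_scal_inv hLc hcoer hq hξ hh
  exact le_mul_add_sqrt_of_div_sub_le (Real.sqrt_nonneg _) hh hε.le hK hc hC.le (by linarith)

theorem hopf_lax_eps_optimizer_small {d : ℕ} (L : E d → ℝ) (G : Measure (E d) → ℝ)
    (T K c C : ℝ)
    (hLconv : ConvexOn ℝ Set.univ L) (hL0 : L 0 = 0)
    (hsuper : ∀ M : ℝ, ∃ R : ℝ, ∀ z : E d, R ≤ ‖z‖ → M * ‖z‖ ≤ L z)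
    (hquad : ∃ C' > 0, ∀ z : E d, L z ≤ C' * (1 + ‖z‖ ^ 2))
    (hc : 0 < c) (hC : 0 < C)
    (hcoer : ∀ z : E d, c * ‖z‖ ^ 2 - C ≤ L z)
    (hK : 0 ≤ K)
    (hG : ∀ μ ∈ P2 d, ∀ ν ∈ P2 d, |G μ - G ν| ≤ K * W2 μ ν) :
    ∃ C' > 0, ∀ (t h ε : ℝ) (μ : Measure (E d)) (ξ : Measure (E d × E d)),
      0 < t → 0 < h → t + h < T → 0 < ε → μ ∈ P2 d → ξ ∈ plans μ →
      HL G L T (t + h) (expMap ξ) + h * Lag L (scal h⁻¹ ξ) ≤ HL G L T t μ + ε →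
      plNorm ξ ≤ C' * (h + Real.sqrt (ε * h)) :=
  hopf_lax_eps_optimizer_small_general L G T K c C hLconv hL0 hquad hc hC hcoer hK hG
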